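/- arXiv:1712.09311 — 3 statements merged into one kernel-verified Lean document; each statement's English description precedes it below -/
import Mathlib

section
/- The set B(ℓ¹(ℕ)) of bounded adjointable operators of the pre-Hilbert ℂ-module ℓ¹(ℕ), i.e. the set of bounded linear operators T on ℓ²(ℕ) such that both T and its Hilbert-space adjoint T* map ℓ¹(ℕ) into ℓ¹(ℕ), is not dense in the algebra B(ℓ²(ℕ)) of all bounded operators on ℓ²(ℕ) with respect to the operator norm. -/
noncomputable abbrev ellTwo : Type := lp (fun _ : ℕ => ℂ) 2

/-!
The operator `V` sending `eₙ` to the normalized indicator of the dyadic block `[2ⁿ, 2ⁿ⁺¹)` is an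
isometry of `ℓ²`, and the `ℓ¹`-mass of `V eₙ` on that block is `√(2ⁿ)`, which is unbounded.
If `T` maps `ℓ¹` into itself, then by the closed graph theorem it is bounded on `ℓ¹`, so the
`ℓ¹`-mass of `T eₙ` on the block is at most a constant `C`; by Cauchy–Schwarz the `ℓ¹`-mass of
`(V - T) eₙ` there is at most `√(2ⁿ) ‖V - T‖`. Hence `√(2ⁿ) (1 - ‖V - T‖) ≤ C` for all `n`, and
`‖V - T‖ ≥ 1`.
-/

open scoped ENNReal InnerProductSpace
open Finset Function

namespace lp

section Sums

variable {α : Type*} {E : α → Type*} [∀ i, NormedAddCommGroup (E i)]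

theorem sum_norm_le_norm (f : lp E 1) (s : Finset α) : ∑ i ∈ s, ‖f i‖ ≤ ‖f‖ := by
  simpa using sum_rpow_le_norm_rpow (by simp) f s

theorem sum_norm_sq_le_norm_sq (f : lp E 2) (s : Finset α) :
    ∑ i ∈ s, ‖f i‖ ^ 2 ≤ ‖f‖ ^ 2 := by
  simpa using sum_rpow_le_norm_rpow (by simp) f s

theorem sum_norm_le_sqrt_card_mul_norm (f : lp E 2) (s : Finset α) :
    ∑ i ∈ s, ‖f i‖ ≤ √(#s : ℝ) * ‖f‖ := by
  refine le_of_sq_le_sq ?_ (by positivity)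
  calc (∑ i ∈ s, ‖f i‖) ^ 2 ≤ #s * ∑ i ∈ s, ‖f i‖ ^ 2 := sq_sum_le_card_mul_sum_sq
    _ ≤ #s * ‖f‖ ^ 2 := by gcongr; exact sum_norm_sq_le_norm_sq f s
    _ = (√(#s : ℝ) * ‖f‖) ^ 2 := by rw [mul_pow, Real.sq_sqrt (Nat.cast_nonneg _)]

theorem sum_norm_le_sum_norm_add_sqrt_card_mul_norm_sub (f g : lp E 2) (s : Finset α) :
    ∑ i ∈ s, ‖f i‖ ≤ ∑ i ∈ s, ‖g i‖ + √(#s : ℝ) * ‖f - g‖ :=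
  calc ∑ i ∈ s, ‖f i‖ ≤ ∑ i ∈ s, (‖g i‖ + ‖(f - g) i‖) :=
        sum_le_sum fun i _ => by simpa using norm_le_norm_add_norm_sub' (f i) (g i)
    _ ≤ ∑ i ∈ s, ‖g i‖ + √(#s : ℝ) * ‖f - g‖ := by
        rw [sum_add_distrib]; gcongr; exact sum_norm_le_sqrt_card_mul_norm _ s

end Sums

section ClosedGraph

variable {𝕜 α : Type*} {E : α → Type*} [NontriviallyNormedField 𝕜]
  [∀ i, NormedAddCommGroup (E i)] [∀ i, NormedSpace 𝕜 (E i)] [∀ i, CompleteSpace (E i)]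
  {p q : ℝ≥0∞} [Fact (1 ≤ p)] [Fact (1 ≤ q)]

theorem continuous_of_continuous_apply {X : Type*} [NormedAddCommGroup X] [NormedSpace 𝕜 X]
    [CompleteSpace X] (F : X →ₗ[𝕜] lp E p) (hF : ∀ i, Continuous fun x => F x i) :
    Continuous F :=
  (ContinuousLinearMap.ofSeqClosedGraph (g := F) fun _ x y hu hFu => lp.ext <| funext fun i =>
    tendsto_nhds_unique (((lipschitzWith_one_eval p i).continuous.tendsto y).comp hFu)
      (((hF i).tendsto x).comp hu)).continuous

variable (𝕜 E) in
noncomputable def inclusionCLM (hpq : p ≤ q) : lp E p →L[𝕜] lp E q :=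
  ⟨linearMapOfLE 𝕜 E hpq, continuous_of_continuous_apply _ fun i =>
    (lipschitzWith_one_eval p i).continuous⟩

theorem coe_inclusionCLM_apply (hpq : p ≤ q) (f : lp E p) : ⇑(inclusionCLM 𝕜 E hpq f) = f :=
  coe_linearMapOfLE_apply hpq f

noncomputable def restrictₗ (T : lp E q →L[𝕜] lp E q) (hpq : p ≤ q)
    (hT : ∀ x : lp E q, Memℓp x p → Memℓp (T x) p) : lp E p →ₗ[𝕜] lp E p where
  toFun x := ⟨T (inclusionCLM 𝕜 E hpq x), hT _ <| by
    rw [coe_inclusionCLM_apply]; exact lp.memℓp x⟩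
  map_add' x y := by ext1; simp only [lp.coeFn_add, map_add]
  map_smul' a x := by ext1; simp only [lp.coeFn_smul, map_smul, RingHom.id_apply]

theorem coe_restrictₗ_apply (T : lp E q →L[𝕜] lp E q) (hpq : p ≤ q)
    (hT : ∀ x : lp E q, Memℓp x p → Memℓp (T x) p) (x : lp E p) :
    ⇑(restrictₗ T hpq hT x) = T (inclusionCLM 𝕜 E hpq x) := by
  ext; rfl

noncomputable def restrictCLM (T : lp E q →L[𝕜] lp E q) (hpq : p ≤ q)
    (hT : ∀ x : lp E q, Memℓp x p → Memℓp (T x) p) : lp E p →L[𝕜] lp E p :=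
  ⟨restrictₗ T hpq hT, continuous_of_continuous_apply _ fun i => by
    simp only [coe_restrictₗ_apply]
    exact (lipschitzWith_one_eval q i).continuous.comp
      (T.comp (inclusionCLM 𝕜 E hpq)).continuous⟩

theorem coe_restrictCLM_apply (T : lp E q →L[𝕜] lp E q) (hpq : p ≤ q)
    (hT : ∀ x : lp E q, Memℓp x p → Memℓp (T x) p) (x : lp E p) :
    ⇑(restrictCLM T hpq hT x) = T (inclusionCLM 𝕜 E hpq x) :=
  coe_restrictₗ_apply T hpq hT x

theorem inclusionCLM_single [DecidableEq α] (hpq : p ≤ q) (i : α) (a : E i) :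
    inclusionCLM 𝕜 E hpq (lp.single p i a) = lp.single q i a := by
  ext1; rw [coe_inclusionCLM_apply, lp.coeFn_single, lp.coeFn_single]

theorem exists_sum_norm_apply_single_le [DecidableEq α] (T : lp E q →L[𝕜] lp E q)
    (hT : ∀ x : lp E q, Memℓp x 1 → Memℓp (T x) 1) :
    ∃ C, ∀ i (a : E i) (s : Finset α),
      ∑ j ∈ s, ‖T (lp.single q i a) j‖ ≤ C * ‖a‖ := by
  set R := restrictCLM T Fact.out hT
  refine ⟨‖R‖, fun i a s => ?_⟩
  have hR : ⇑(R (lp.single 1 i a)) = T (lp.single q i a) := by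
    rw [coe_restrictCLM_apply, inclusionCLM_single]
  calc ∑ j ∈ s, ‖T (lp.single q i a) j‖
      ≤ ‖R (lp.single 1 i a)‖ := hR ▸ sum_norm_le_norm _ s
    _ ≤ ‖R‖ * ‖a‖ := by simpa [lp.norm_single] using R.le_opNorm (lp.single 1 i a)

end ClosedGraph

section Indicator

variable {𝕜 ι : Type*} [RCLike 𝕜] [DecidableEq ι]

variable (𝕜) in
noncomputable def normalizedIndicator (s : Finset ι) : lp (fun _ : ι => 𝕜) 2 :=
  (((√(#s : ℝ))⁻¹ : ℝ) : 𝕜) • ∑ j ∈ s, lp.single 2 j 1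

theorem normalizedIndicator_apply (s : Finset ι) (j : ι) :
    normalizedIndicator 𝕜 s j =
      if j ∈ s then (((√(#s : ℝ))⁻¹ : ℝ) : 𝕜) else 0 := by
  rw [normalizedIndicator, coeFn_smul, Pi.smul_apply, coeFn_sum, Finset.sum_apply]
  simp only [map_inv₀, lp.single_apply, Pi.single_apply, sum_ite_eq, smul_eq_mul, mul_ite,
    mul_one, mul_zero]

theorem inner_normalizedIndicator (s t : Finset ι) :
    ⟪normalizedIndicator 𝕜 s, normalizedIndicator 𝕜 t⟫_𝕜 =
      (((√(#s : ℝ))⁻¹ * (√(#t : ℝ))⁻¹ * #(s ∩ t) : ℝ) : 𝕜) := by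
  rw [normalizedIndicator, inner_smul_left, sum_inner]
  simp only [map_inv₀, RCLike.conj_ofReal, inner_single_left, normalizedIndicator_apply,
    RCLike.inner_apply, map_one, mul_one, sum_ite_mem, sum_const, nsmul_eq_mul, map_mul,
    map_natCast]
  ring

theorem orthonormal_normalizedIndicator {κ : Type*} {s : κ → Finset ι}
    (hs : Pairwise (Disjoint on s)) (hne : ∀ n, (s n).Nonempty) :
    Orthonormal 𝕜 fun n => normalizedIndicator 𝕜 (s n) := by
  classical
  rw [orthonormal_iff_ite]
  intro m n
  rw [inner_normalizedIndicator]
  split_ifs with h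
  · subst h
    have : (0 : ℝ) < #(s m) := by exact_mod_cast (hne m).card_pos
    rw [inter_self, ← mul_inv, Real.mul_self_sqrt this.le, inv_mul_cancel₀ this.ne',
      RCLike.ofReal_one]
  · simp [Finset.disjoint_iff_inter_eq_empty.mp (hs h)]

theorem sum_norm_normalizedIndicator (s : Finset ι) :
    ∑ j ∈ s, ‖normalizedIndicator 𝕜 s j‖ = √(#s : ℝ) := by
  rw [sum_congr rfl fun j hj => by rw [normalizedIndicator_apply, if_pos hj]]
  simp only [map_inv₀, norm_inv, norm_algebraMap', Real.norm_eq_abs, sum_const, nsmul_eq_mul]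
  rw [abs_of_nonneg (Real.sqrt_nonneg _), ← div_eq_mul_inv, Real.div_sqrt]

end Indicator

end lp

def dyadicBlock (n : ℕ) : Finset ℕ := Ico (2 ^ n) (2 ^ (n + 1))

theorem card_dyadicBlock (n : ℕ) : #(dyadicBlock n) = 2 ^ n := by
  rw [dyadicBlock, Nat.card_Ico, pow_succ]; omega

theorem dyadicBlock_nonempty (n : ℕ) : (dyadicBlock n).Nonempty := by
  rw [← card_pos, card_dyadicBlock]; positivity

theorem pairwise_disjoint_dyadicBlock : Pairwise (Disjoint on dyadicBlock) := by
  intro m n hmn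
  wlog h : m < n generalizing m n
  · exact (this hmn.symm (by omega)).symm
  have : 2 ^ (m + 1) ≤ 2 ^ n := Nat.pow_le_pow_right two_pos h
  simp only [onFun, dyadicBlock, disjoint_left, mem_Ico]
  omega

noncomputable def dyadicSpreading : ellTwo →ₗᵢ[ℂ] ellTwo :=
  (lp.orthonormal_normalizedIndicator pairwise_disjoint_dyadicBlock
    dyadicBlock_nonempty).orthogonalFamily.linearIsometry

theorem dyadicSpreading_single (n : ℕ) :
    dyadicSpreading (lp.single 2 n 1) = lp.normalizedIndicator ℂ (dyadicBlock n) := by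
  simp [dyadicSpreading]

/-- The set of bounded adjointable operators of the pre-Hilbert ℂ-module
ℓ¹(ℕ), i.e. bounded operators `T` on ℓ²(ℕ) such that both `T` and its Hilbert-space
adjoint `T*` map ℓ¹(ℕ) into ℓ¹(ℕ), is not dense in `B(ℓ²(ℕ))` in the operator norm. -/
theorem stmt0 :
    ¬ ∀ (V : ellTwo →L[ℂ] ellTwo) (ε : ℝ), 0 < ε →
      ∃ T : ellTwo →L[ℂ] ellTwo,
        ((∀ x : ellTwo, Memℓp (fun i => x i) 1 → Memℓp (fun i => T x i) 1) ∧
         (∀ x : ellTwo, Memℓp (fun i => x i) 1 →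
            Memℓp (fun i => (ContinuousLinearMap.adjoint T) x i) 1)) ∧
        ‖T - V‖ < ε := by
  intro H
  set V := dyadicSpreading.toContinuousLinearMap
  obtain ⟨T, ⟨hT, -⟩, hTV⟩ := H V (1 / 2) one_half_pos
  obtain ⟨C, hC⟩ := lp.exists_sum_norm_apply_single_le T hT
  obtain ⟨n, hn⟩ := pow_unbounded_of_one_lt ((2 * C) ^ 2) one_lt_two
  set e : ellTwo := lp.single 2 n 1
  have hdist : ‖V e - T e‖ ≤ 1 / 2 := by
    calc ‖V e - T e‖ = ‖(T - V) e‖ := by rw [norm_sub_rev]; rfl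
      _ ≤ ‖T - V‖ := by simpa [e, lp.norm_single] using (T - V).le_opNorm e
      _ ≤ 1 / 2 := hTV.le
  have key : √(2 ^ n) ≤ C + √(2 ^ n) * (1 / 2) :=
    calc √(2 ^ n) = ∑ j ∈ dyadicBlock n, ‖V e j‖ := by
          rw [← Nat.cast_ofNat, ← Nat.cast_pow, ← card_dyadicBlock,
            ← lp.sum_norm_normalizedIndicator (𝕜 := ℂ), ← dyadicSpreading_single]; rfl
      _ ≤ ∑ j ∈ dyadicBlock n, ‖T e j‖ + √(2 ^ n) * ‖V e - T e‖ := by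
          have := lp.sum_norm_le_sum_norm_add_sqrt_card_mul_norm_sub (V e) (T e) (dyadicBlock n)
          rwa [card_dyadicBlock, Nat.cast_pow, Nat.cast_ofNat] at this
      _ ≤ C + √(2 ^ n) * (1 / 2) := by
          gcongr
          simpa using hC n 1 (dyadicBlock n)
  have hlarge : 2 * C < √(2 ^ n) := Real.lt_sqrt_of_sq_lt hn
  linarith
end

section
/- Let ξ_n = 2^{-n/2} Σ_{i=2^n}^{2^{n+1}-1} e_i for n ≥ 1 (these are pairwise orthogonal unit vectors), and let V be the unique bounded operator (an isometry) on ℓ²(ℕ) with V e_n = ξ_n for all n ≥ 1. Then every bounded linear operator T on ℓ²(ℕ) such that both T and its Hilbert-space adjoint T* map ℓ¹(ℕ) into ℓ¹(ℕ) satisfies ‖T − V‖ ≥ 1/2 in operator norm. -/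
/-- The standard orthonormal basis vectors of ℓ²(ℕ). -/
noncomputable def e (n : ℕ) : ellTwo := lp.single 2 n (1 : ℂ)

/-- `ξ n = 2^{-n/2} ∑_{i=2^n}^{2^{n+1}-1} e i`. -/
noncomputable def xiVec (n : ℕ) : ellTwo :=
  ((Real.sqrt (2 ^ n) : ℝ) : ℂ)⁻¹ • ∑ i ∈ Finset.Icc (2 ^ n) (2 ^ (n + 1) - 1), e i

open scoped ENNReal
open Filter Finset

namespace lp

variable {α 𝕜 : Type*} [NontriviallyNormedField 𝕜] {E : α → Type*}
  [∀ i, NormedAddCommGroup (E i)] [∀ i, NormedSpace 𝕜 (E i)] [∀ i, CompleteSpace (E i)]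
  {p q : ℝ≥0∞} [Fact (1 ≤ p)] [Fact (1 ≤ q)]

variable (𝕜 E) in
noncomputable def continuousLinearMapOfLE (h : p ≤ q) : lp E p →L[𝕜] lp E q :=
  ⟨linearMapOfLE 𝕜 E h, (linearMapOfLE 𝕜 E h).continuous_of_seq_closed_graph
    fun u x y hu hy => by
      ext i
      refine tendsto_nhds_unique ((evalCLM 𝕜 E q i).continuous.tendsto y |>.comp hy) ?_
      simpa [Function.comp_def, evalCLM] using (evalCLM 𝕜 E p i).continuous.tendsto x |>.comp hu⟩

@[simp]
lemma continuousLinearMapOfLE_apply (h : p ≤ q) (f : lp E p) (i : α) :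
    continuousLinearMapOfLE 𝕜 E h f i = f i :=
  rfl

end lp

lemma lp.norm_sum_apply_le_sqrt_card_mul_norm {α E : Type*} [NormedAddCommGroup E]
    (x : lp (fun _ : α => E) 2) (s : Finset α) : ‖∑ i ∈ s, x i‖ ≤ √(#s) * ‖x‖ := by
  have hsq : ∑ i ∈ s, ‖x i‖ ^ 2 ≤ ‖x‖ ^ 2 := by
    simpa [Real.rpow_two] using lp.sum_rpow_le_norm_rpow (p := 2) (by norm_num) x s
  calc ‖∑ i ∈ s, x i‖ ≤ ∑ i ∈ s, ‖x i‖ := norm_sum_le _ _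
    _ = √((∑ i ∈ s, ‖x i‖) ^ 2) := (Real.sqrt_sq (by positivity)).symm
    _ ≤ √(#s * ‖x‖ ^ 2) := by
        gcongr
        exact (sq_sum_le_card_mul_sum_sq).trans (by gcongr)
    _ = √(#s) * ‖x‖ := by rw [Real.sqrt_mul (by positivity), Real.sqrt_sq (norm_nonneg _)]

lemma exists_norm_sum_apply_le_of_memℓp_one {α ι 𝕜 : Type*} [RCLike 𝕜]
    (T : lp (fun _ : α => 𝕜) 2 →L[𝕜] lp (fun _ : α => 𝕜) 2)
    (hT : ∀ x : lp (fun _ : α => 𝕜) 2, Memℓp (fun i => x i) 1 → Memℓp (fun i => T x i) 1)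
    (s : ι → Finset α) :
    ∃ C, ∀ n, ∀ x : lp (fun _ : α => 𝕜) 1,
      ‖∑ i ∈ s n, T (lp.continuousLinearMapOfLE 𝕜 _ one_le_two x) i‖ ≤ C * ‖x‖ := by
  let ι₁₂ := lp.continuousLinearMapOfLE 𝕜 (fun _ : α => 𝕜) (p := 1) one_le_two
  let g n : lp (fun _ : α => 𝕜) 1 →L[𝕜] 𝕜 :=
    (∑ i ∈ s n, lp.evalCLM 𝕜 (fun _ : α => 𝕜) 2 i) ∘L T ∘L ι₁₂
  have hg n x : g n x = ∑ i ∈ s n, T (ι₁₂ x) i := by simp [g, lp.evalCLM]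
  obtain ⟨C, hC⟩ := banach_steinhaus (g := g) fun x => by
    have hsum : Summable fun i => ‖T (ι₁₂ x) i‖ := by
      simpa using (hT (ι₁₂ x) (by simpa [ι₁₂] using lp.memℓp x)).summable (p := 1) (by norm_num)
    refine ⟨∑' i, ‖T (ι₁₂ x) i‖, fun n => ?_⟩
    rw [hg]
    exact (norm_sum_le _ _).trans (hsum.sum_le_tsum _ fun i _ => norm_nonneg _)
  refine ⟨C, fun n x => ?_⟩
  rw [← hg]
  exact (g n).le_of_opNorm_le (hC n) x

lemma one_le_of_forall_le_add_mul {u : ℕ → ℝ} {a C : ℝ} (hu : Tendsto u atTop atTop)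
    (h : ∀ᶠ n in atTop, u n ≤ C + u n * a) : 1 ≤ a := by
  by_contra! ha
  obtain ⟨n, hn, hCn⟩ :=
    ((hu.atTop_mul_const (sub_pos.2 ha)).eventually_gt_atTop C).and h |>.exists
  linarith

lemma card_Icc_two_pow (n : ℕ) : #(Icc (2 ^ n) (2 ^ (n + 1) - 1)) = 2 ^ n := by
  rw [Nat.card_Icc, pow_succ]
  have := Nat.one_le_two_pow (n := n)
  omega

lemma sum_apply_sum_e (s : Finset ℕ) : ∑ i ∈ s, (∑ j ∈ s, e j) i = #s := by
  simp_rw [lp.coeFn_sum, Finset.sum_apply, e, lp.single_apply]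
  simp

lemma sum_apply_xiVec (n : ℕ) : ∑ i ∈ Icc (2 ^ n) (2 ^ (n + 1) - 1), xiVec n i = √(2 ^ n) := by
  have h2n : (0 : ℝ) < √(2 ^ n) := by positivity
  rw [xiVec, lp.coeFn_smul]
  simp only [Pi.smul_apply, smul_eq_mul]
  rw [← mul_sum, sum_apply_sum_e, card_Icc_two_pow,
    inv_mul_eq_iff_eq_mul₀ (by exact_mod_cast h2n.ne'), ← Complex.ofReal_mul, Real.mul_self_sqrt (by positivity)]
  norm_cast

lemma e_eq_continuousLinearMapOfLE_single (n : ℕ) :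
    e n = lp.continuousLinearMapOfLE ℂ (fun _ : ℕ => ℂ) one_le_two (lp.single 1 n 1) := rfl

theorem stmt1_general (V T : ellTwo →L[ℂ] ellTwo)
    (hV : ∀ n : ℕ, 1 ≤ n → V (e n) = xiVec n)
    (hT : ∀ x : ellTwo, Memℓp (fun i => x i) 1 → Memℓp (fun i => T x i) 1) :
    1 / 2 ≤ ‖T - V‖ := by
  obtain ⟨C, hC⟩ := exists_norm_sum_apply_le_of_memℓp_one T hT
    fun n => Icc (2 ^ n) (2 ^ (n + 1) - 1)
  have hblock : ∀ n, 1 ≤ n → √(2 ^ n) ≤ C + √(2 ^ n) * ‖T - V‖ := fun n hn => by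
    set s := Icc (2 ^ n) (2 ^ (n + 1) - 1)
    have hTe : ‖∑ i ∈ s, T (e n) i‖ ≤ C := by
      simpa [e_eq_continuousLinearMapOfLE_single, lp.norm_single] using hC n (lp.single 1 n 1)
    have hTVe : ‖∑ i ∈ s, (T - V) (e n) i‖ ≤ √(2 ^ n) * ‖T - V‖ := by
      calc _ ≤ √(#s) * ‖(T - V) (e n)‖ := lp.norm_sum_apply_le_sqrt_card_mul_norm _ s
        _ ≤ √(2 ^ n) * ‖T - V‖ := by
          rw [card_Icc_two_pow]
          push_cast
          gcongr
          simpa [e, lp.norm_single] using (T - V).le_opNorm (e n)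
    calc √(2 ^ n) = ‖∑ i ∈ s, V (e n) i‖ := by
          rw [hV n hn, sum_apply_xiVec, Complex.norm_real, Real.norm_of_nonneg (by positivity)]
      _ = ‖∑ i ∈ s, T (e n) i - ∑ i ∈ s, (T - V) (e n) i‖ := by
          simp only [sub_apply, lp.coeFn_sub, Pi.sub_apply, sum_sub_distrib,
            sub_sub_cancel]
      _ ≤ C + √(2 ^ n) * ‖T - V‖ := (norm_sub_le _ _).trans (add_le_add hTe hTVe)
  have hsqrt : Tendsto (fun n : ℕ => √(2 ^ n)) atTop atTop :=
    Real.tendsto_sqrt_atTop.comp (tendsto_pow_atTop_atTop_of_one_lt one_lt_two)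
  have := one_le_of_forall_le_add_mul hsqrt (eventually_atTop.2 ⟨1, hblock⟩)
  linarith

/-- if `V` is a bounded operator on ℓ²(ℕ) with `V eₙ = ξₙ` for all `n ≥ 1`,
then every bounded operator `T` on ℓ²(ℕ) such that both `T` and its Hilbert-space adjoint
map ℓ¹(ℕ) into ℓ¹(ℕ) satisfies `‖T − V‖ ≥ 1/2`. -/
theorem stmt1 (V T : ellTwo →L[ℂ] ellTwo)
    (hV : ∀ n : ℕ, 1 ≤ n → V (e n) = xiVec n)
    (hT : ∀ x : ellTwo, Memℓp (fun i => x i) 1 → Memℓp (fun i => T x i) 1)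
    (hTadj : ∀ x : ellTwo, Memℓp (fun i => x i) 1 →
      Memℓp (fun i => (ContinuousLinearMap.adjoint T) x i) 1) :
    1 / 2 ≤ ‖T - V‖ :=
  stmt1_general V T hV hT
end

section
/- Let T be a bounded linear operator on ℓ²(ℕ) such that T e_m ∈ ℓ¹(ℕ) and T* e_m ∈ ℓ¹(ℕ) for every m ≥ 1, where T* is the Hilbert-space adjoint. Then there exist strictly increasing sequences of positive integers 1 = n_0 < n_1 < n_2 < ⋯ and n(1) < n(2) < ⋯ with n(k) ≥ k² for every k ≥ 1, such that for every l ≥ 1 one has Σ_{i ∉ [n_{l−1}, n_l − 1]} |⟨e_i, T e_{n(l)}⟩| < 1 (the sum ranging over all indices i ≥ 1 outside the interval [n_{l−1}, n_l − 1]). -/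
/-- if `T` is a bounded operator on ℓ²(ℕ) with `T eₘ ∈ ℓ¹` and `T* eₘ ∈ ℓ¹`
for every `m ≥ 1`, then there exist strictly increasing sequences of positive integers
`1 = a 0 < a 1 < a 2 < ⋯` and `N 1 < N 2 < ⋯` with `N k ≥ k²` for `k ≥ 1`, such that
for every `l ≥ 1` the sum of `|⟨eᵢ, T e_{N l}⟩|` over all indices `i ≥ 1` outside the
interval `[a (l-1), a l − 1]` is `< 1`. -/
theorem stmt3 (T : ellTwo →L[ℂ] ellTwo)
    (hT : ∀ m : ℕ, 1 ≤ m → Memℓp (fun i => T (e m) i) 1)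
    (hTadj : ∀ m : ℕ, 1 ≤ m →
      Memℓp (fun i => (ContinuousLinearMap.adjoint T) (e m) i) 1) :
    ∃ a N : ℕ → ℕ,
      a 0 = 1 ∧ StrictMono a ∧ StrictMono N ∧ (∀ k : ℕ, 1 ≤ k → k ^ 2 ≤ N k) ∧
      ∀ l : ℕ, 1 ≤ l →
        ∑' i : {i : ℕ // 1 ≤ i ∧ i ∉ Set.Icc (a (l - 1)) (a l - 1)},
          ‖@inner ℂ _ _ (e i.1) (T (e (N l)))‖ < 1 := by
  classical
  -- basic identities
  have key : ∀ i n : ℕ, ‖@inner ℂ _ _ (e i) (T (e n))‖ = ‖T (e n) i‖ := by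
    intro i n
    rw [e, lp.inner_single_left]
    simp [RCLike.inner_apply]
  have key2 : ∀ i n : ℕ,
      ‖T (e n) i‖ = ‖(ContinuousLinearMap.adjoint T) (e i) n‖ := by
    intro i n
    have h2 : @inner ℂ _ _ (e i) (T (e n)) = T (e n) i := by
      rw [e, lp.inner_single_left]; simp [RCLike.inner_apply]
    have h3 : @inner ℂ _ _ ((ContinuousLinearMap.adjoint T) (e i)) (e n)
        = (starRingEnd ℂ) ((ContinuousLinearMap.adjoint T) (e i) n) := by
      rw [show e n = lp.single 2 n (1:ℂ) from rfl, lp.inner_single_right]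
      simp [RCLike.inner_apply]
    rw [← h2, ← ContinuousLinearMap.adjoint_inner_left, h3, RCLike.norm_conj]
  have hg : ∀ m : ℕ, 1 ≤ m → Summable fun i => ‖T (e m) i‖ := by
    intro m hm
    have := Memℓp.summable (by norm_num) (hT m hm)
    simpa using this
  have hg' : ∀ i : ℕ, 1 ≤ i →
      Summable fun n => ‖(ContinuousLinearMap.adjoint T) (e i) n‖ := by
    intro i hi
    have := Memℓp.summable (by norm_num) (hTadj i hi)
    simpa using this
  -- main construction step
  have step : ∀ b c : ℕ, ∃ M A : ℕ, c < M ∧ b < A ∧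
      (∑ i ∈ Finset.Ico 1 b, ‖T (e M) i‖)
        + (∑' i : {x : ℕ // x ∉ Finset.range A}, ‖T (e M) i.1‖) < 1 := by
    intro b c
    have hε : (0 : ℝ) < 1 / (2 * (b + 1)) := by positivity
    have hev1 : ∀ᶠ n : ℕ in Filter.atTop,
        ∀ i ∈ Finset.Ico 1 b,
          ‖(ContinuousLinearMap.adjoint T) (e i) n‖ < 1 / (2 * (b + 1)) := by
      rw [Filter.eventually_all_finset]
      intro i hi
      have hi1 : 1 ≤ i := (Finset.mem_Ico.1 hi).1
      exact ((hg' i hi1).tendsto_atTop_zero).eventually_lt_const hε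
    obtain ⟨M, hMc, hMev⟩ := ((Filter.eventually_gt_atTop c).and hev1).exists
    have hM1 : 1 ≤ M := Nat.one_le_iff_ne_zero.2 (by omega)
    -- head bound
    have hhead : (∑ i ∈ Finset.Ico 1 b, ‖T (e M) i‖) ≤ 1 / 2 := by
      have h1 : (∑ i ∈ Finset.Ico 1 b, ‖T (e M) i‖)
          ≤ (Finset.Ico 1 b).card • (1 / (2 * ((b : ℝ) + 1))) := by
        refine Finset.sum_le_card_nsmul _ _ _ ?_
        intro i hi
        rw [key2]
        exact le_of_lt (hMev i hi)
      have hcard : ((Finset.Ico 1 b).card : ℝ) ≤ (b : ℝ) + 1 := by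
        rw [Nat.card_Ico]
        have : ((b - 1 : ℕ) : ℝ) ≤ ((b + 1 : ℕ) : ℝ) := by
          exact_mod_cast Nat.sub_le_iff_le_add.2 (by omega)
        simpa using this
      calc (∑ i ∈ Finset.Ico 1 b, ‖T (e M) i‖)
          ≤ (Finset.Ico 1 b).card • (1 / (2 * ((b : ℝ) + 1))) := h1
        _ = ((Finset.Ico 1 b).card : ℝ) * (1 / (2 * ((b : ℝ) + 1))) := by
            rw [nsmul_eq_mul]
        _ ≤ ((b : ℝ) + 1) * (1 / (2 * ((b : ℝ) + 1))) := by
            apply mul_le_mul_of_nonneg_right hcard (le_of_lt hε)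
        _ = 1 / 2 := by
            field_simp
    -- tail
    have htail : Filter.Tendsto
        (fun A : ℕ => ∑' i : {x : ℕ // x ∉ Finset.range A}, ‖T (e M) i.1‖)
        Filter.atTop (nhds 0) :=
      (tendsto_tsum_compl_atTop_zero fun i => ‖T (e M) i‖).comp
        Filter.tendsto_finset_range
    obtain ⟨A, hbA, hAtail⟩ :=
      ((Filter.eventually_gt_atTop b).and
        (htail.eventually_lt_const (by norm_num : (0:ℝ) < 1/2))).exists
    exact ⟨M, A, hMc, hbA, by linarith⟩
  choose f₁ f₂ hf1 hf2 hf3 using step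
  -- recursive construction
  set F : ℕ → ℕ × ℕ := fun l =>
    Nat.rec ((1 : ℕ), (0 : ℕ))
      (fun l p => (f₂ p.1 (max p.2 ((l + 1) ^ 2 - 1)),
                   f₁ p.1 (max p.2 ((l + 1) ^ 2 - 1)))) l with hF
  set a : ℕ → ℕ := fun l => (F l).1 with ha
  set N : ℕ → ℕ := fun l => (F l).2 with hN
  have ha0 : a 0 = 1 := rfl
  have haS : ∀ l, a (l + 1) = f₂ (a l) (max (N l) ((l + 1) ^ 2 - 1)) := fun l => rfl
  have hNS : ∀ l, N (l + 1) = f₁ (a l) (max (N l) ((l + 1) ^ 2 - 1)) := fun l => rfl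
  have haa : ∀ l, a l < a (l + 1) := by
    intro l; rw [haS]; exact hf2 _ _
  have hNlt : ∀ l, max (N l) ((l + 1) ^ 2 - 1) < N (l + 1) := by
    intro l; rw [hNS]; exact hf1 _ _
  have hNN : ∀ l, N l < N (l + 1) := fun l =>
    lt_of_le_of_lt (le_max_left _ _) (hNlt l)
  have hapos : ∀ l, 1 ≤ a l := by
    intro l
    induction l with
    | zero => exact le_of_eq ha0.symm
    | succ n ih => exact le_of_lt (lt_of_le_of_lt ih (haa n))
  refine ⟨a, N, ha0, strictMono_nat_of_lt_succ haa, strictMono_nat_of_lt_succ hNN,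
    ?_, ?_⟩
  · intro k hk
    obtain ⟨m, rfl⟩ : ∃ m, k = m + 1 := ⟨k - 1, by omega⟩
    have h1 := hNlt m
    have h2 : 1 ≤ (m + 1) ^ 2 := Nat.one_le_pow _ _ (Nat.succ_pos m)
    have h3 : (m + 1) ^ 2 - 1 ≤ max (N m) ((m + 1) ^ 2 - 1) := le_max_right _ _
    omega
  · intro l hl
    obtain ⟨m, rfl⟩ : ∃ m, l = m + 1 := ⟨l - 1, by omega⟩
    simp only [Nat.add_sub_cancel, Nat.succ_sub_one]
    set b := a m with hb
    set A := a (m + 1) with hA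
    set M := N (m + 1) with hM
    have hbA : b < A := haa m
    have hb1 : 1 ≤ b := hapos m
    have hspec := hf3 b (max (N m) ((m + 1) ^ 2 - 1))
    rw [← hNS, ← hM, ← haS, ← hA] at hspec
    have hM1 : 1 ≤ M := by
      have := hf1 b (max (N m) ((m + 1) ^ 2 - 1))
      rw [← hNS, ← hM] at this
      omega
    set g : ℕ → ℝ := fun i => ‖T (e M) i‖ with hgdef
    have hgs : Summable g := hg M hM1
    set S' : Set ℕ := {i : ℕ | 1 ≤ i ∧ i ∉ Set.Icc b (A - 1)} with hS'
    set I1 : Set ℕ := (↑(Finset.Ico 1 b) : Set ℕ) with hI1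
    set I2 : Set ℕ := {x : ℕ | x ∉ Finset.range A} with hI2
    have hpt : ∀ i, S'.indicator g i ≤ I1.indicator g i + I2.indicator g i := by
      intro i
      by_cases hi : i ∈ S'
      · rw [Set.indicator_of_mem hi]
        have hiu : i ∈ I1 ∪ I2 := by
          simp only [hS', Set.mem_setOf_eq, Set.mem_Icc, not_and, not_le] at hi
          simp only [hI1, hI2, Set.mem_union, Finset.coe_Ico, Set.mem_Ico,
            Set.mem_setOf_eq, Finset.mem_range, not_lt]
          omega
        rcases hiu with h | h
        · rw [Set.indicator_of_mem h]
          exact le_add_of_nonneg_right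
            (Set.indicator_apply_nonneg fun _ => norm_nonneg _)
        · rw [Set.indicator_of_mem h]
          exact le_add_of_nonneg_left
            (Set.indicator_apply_nonneg fun _ => norm_nonneg _)
      · rw [Set.indicator_of_notMem hi]
        exact add_nonneg (Set.indicator_apply_nonneg fun _ => norm_nonneg _)
          (Set.indicator_apply_nonneg fun _ => norm_nonneg _)
    have hterm : ∀ i : {i : ℕ // 1 ≤ i ∧ i ∉ Set.Icc b (A - 1)},
        ‖@inner ℂ _ _ (e i.1) (T (e M))‖ = g i.1 := fun i => key i.1 M
    calc (∑' i : {i : ℕ // 1 ≤ i ∧ i ∉ Set.Icc b (A - 1)},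
            ‖@inner ℂ _ _ (e i.1) (T (e M))‖)
        = ∑' i : {i : ℕ // 1 ≤ i ∧ i ∉ Set.Icc b (A - 1)}, g i.1 := tsum_congr hterm
      _ = ∑' i : ℕ, S'.indicator g i := tsum_subtype S' g
      _ ≤ ∑' i : ℕ, (I1.indicator g i + I2.indicator g i) :=
          Summable.tsum_le_tsum hpt (hgs.indicator S')
            ((hgs.indicator I1).add (hgs.indicator I2))
      _ = (∑' i : ℕ, I1.indicator g i) + ∑' i : ℕ, I2.indicator g i :=
          Summable.tsum_add (hgs.indicator I1) (hgs.indicator I2)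
      _ = (∑ i ∈ Finset.Ico 1 b, g i)
            + ∑' i : {x : ℕ // x ∉ Finset.range A}, g i.1 := by
          rw [← tsum_subtype I1 g, ← tsum_subtype I2 g]
          congr 1
          exact Finset.tsum_subtype' _ g
      _ < 1 := hspec
end
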